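/- arXiv:2311.14184 — 2 statements merged into one kernel-verified Lean document; each statement's English description precedes it below -/
import Mathlib

section
/- Let n be a positive integer, let k, ℓ, m be positive real numbers, and define h : (0, ∞) → ℝ by h(t) = −n t · log(k n t/(2 e π ℓ m)). Set t₀ = 2 π ℓ m/(k n). Let T > 0 and U ∈ (0, 1/4]. If t₀ < T/2 or t₀ > 3T, then for every t ∈ [T(1 − U), T(2 + U)] one has |h'(t)| ≥ n · log(6/5). -/
open Real Set

/-!
Writing `t₀ = 2πℓm/(kn)`, the phase is `h(t) = -n t (log (t/t₀) - 1)`, so `h'(t) = -n log (t/t₀)`.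
On `[T(1 - U), T(2 + U)] ⊆ [3T/4, 9T/4]` the ratio `t/t₀` exceeds `3/2` when `t₀ < T/2`, and
`t₀/t` exceeds `4/3` when `t₀ > 3T`; both are at least `6/5`.
-/

theorem hasDerivAt_mul_log_const_mul {c x : ℝ} (hcx : c * x ≠ 0) :
    HasDerivAt (fun t => t * log (c * t)) (log (c * x) + 1) x := by
  have hc : c ≠ 0 := left_ne_zero_of_mul hcx
  have hx : x ≠ 0 := right_ne_zero_of_mul hcx
  refine ((hasDerivAt_id' x).mul (((hasDerivAt_id' x).const_mul c).log hcx)).congr_deriv ?_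
  field_simp

theorem log_le_abs_log_of_le_or_le_inv {a x : ℝ} (ha : 0 < a) (h : a ≤ x ∨ a ≤ x⁻¹) :
    log a ≤ |log x| := by
  rcases h with h | h
  · exact (log_le_log ha h).trans (le_abs_self _)
  · exact (log_le_log ha h).trans (by rw [log_inv]; exact neg_le_abs _)

theorem six_fifths_le_div_or_le_inv_div {T U t t₀ : ℝ} (hT : 0 < T) (hU : U ≤ 1 / 4)
    (ht : t ∈ Icc (T * (1 - U)) (T * (2 + U))) (ht₀ : 0 < t₀)
    (hcase : t₀ < T / 2 ∨ t₀ > 3 * T) :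
    6 / 5 ≤ t / t₀ ∨ 6 / 5 ≤ (t / t₀)⁻¹ := by
  obtain ⟨hlo, hhi⟩ := ht
  have hTU : T * U ≤ T / 4 := by nlinarith
  rcases hcase with hsmall | hlarge
  · left
    rw [le_div_iff₀ ht₀]
    nlinarith
  · right
    rw [inv_div, le_div_iff₀ (by nlinarith)]
    nlinarith

/-- Case I of the stationary phase analysis: if the stationary point
`t₀ = 2πℓm/(kn)` of `h(t) = −nt log(knt/(2eπℓm))` satisfies `t₀ < T/2` or `t₀ > 3T`,
then `|h'(t)| ≥ n log(6/5)` for every `t ∈ [T(1 − U), T(2 + U)]`, where `U ∈ (0, 1/4]`. -/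
theorem stmt_6 (n : ℕ) (hn : 0 < n) (k l m : ℝ) (hk : 0 < k) (hl : 0 < l) (hm : 0 < m)
    (h : ℝ → ℝ)
    (hdef : ∀ t : ℝ, h t = -(n : ℝ) * t * Real.log (k * n * t / (2 * Real.exp 1 * Real.pi * l * m)))
    (T U : ℝ) (hT : 0 < T) (hU : U ∈ Set.Ioc (0 : ℝ) (1/4))
    (hcase : 2 * Real.pi * l * m / (k * n) < T / 2 ∨ 2 * Real.pi * l * m / (k * n) > 3 * T) :
    ∀ t ∈ Set.Icc (T * (1 - U)) (T * (2 + U)), (n : ℝ) * Real.log (6/5) ≤ |deriv h t| := by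
  intro t ht
  set t₀ := 2 * π * l * m / (k * n)
  set c := k * n / (2 * exp 1 * π * l * m)
  have hn' : (0 : ℝ) < n := by exact_mod_cast hn
  have ht₀ : 0 < t₀ := by positivity
  have htpos : 0 < t := by nlinarith [ht.1, hU.2]
  have hct : c * t = t / t₀ / exp 1 := by
    simp only [c, t₀]
    field_simp
  have hlog : log (c * t) + 1 = log (t / t₀) := by
    rw [hct, log_div (by positivity) (exp_ne_zero 1), log_exp]
    ring
  have hh : h = fun s => -(n : ℝ) * (s * log (c * s)) := by
    funext s
    rw [hdef, div_mul_eq_mul_div, mul_assoc]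
  have hderiv : HasDerivAt h (-n * log (t / t₀)) t := by
    rw [hh, ← hlog]
    exact (hasDerivAt_mul_log_const_mul (by positivity)).const_mul _
  rw [hderiv.deriv, abs_mul, abs_neg, Nat.abs_cast]
  exact mul_le_mul_of_nonneg_left (log_le_abs_log_of_le_or_le_inv (by norm_num)
    (six_fifths_le_div_or_le_inv_div hT hU.2 ht ht₀ hcase)) n.cast_nonneg
end

section
/- Let j be a nonnegative integer and let σ ∈ (0, 1]. There exists a constant C' > 0, depending only on j and σ, with the following property. Let T ≥ 1, U ∈ (0, 1/2), α ∈ ℝ, C > 0, and let w : ℝ → ℂ be an infinitely differentiable function whose support is contained in [T(1 − U), T(2 + U)] and which satisfies |w^{(i)}(x)| ≤ C · T^{α} · (T U)^{−i} for every integer 0 ≤ i ≤ j and every x ∈ ℝ. Then for every real τ, |∫_0^∞ w(x) x^{σ + iτ − 1} dx| ≤ C' · C · T^{σ + α} · U^{−j} / (1 + |τ|^{j}). -/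
open Complex Real MeasureTheory Set

noncomputable def einf : WithTop ℕ∞ := ((⊤:ℕ∞):WithTop ℕ∞)
lemma one_le_einf : (1:WithTop ℕ∞) ≤ einf := by rw [einf]; exact_mod_cast le_top

lemma mellin_ibp_step (a b : ℝ) (ha : 0 < a) (hab : a ≤ b)
    (g : ℝ → ℂ) (hg : ContDiff ℝ einf g) (hga : g a = 0) (hgb : g b = 0)
    (z : ℂ) (hz : z ≠ 0) :
    ∫ x in a..b, g x * (x : ℂ) ^ (z - 1)
      = -(z⁻¹ * ∫ x in a..b, deriv g x * (x : ℂ) ^ z) := by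
  have huicc : Set.uIcc a b = Icc a b := Set.uIcc_of_le hab
  have hpos : ∀ x ∈ Set.uIcc a b, (0:ℝ) < x := by
    intro x hx
    rw [huicc] at hx
    exact lt_of_lt_of_le ha hx.1
  have hz1 : z - 1 ≠ -1 := by
    intro h
    apply hz
    linear_combination h
  have hv : ∀ x ∈ Set.uIcc a b, HasDerivAt (fun y : ℝ => (y : ℂ) ^ z / z) ((x : ℂ) ^ (z - 1)) x := by
    intro x hx
    have h := hasDerivAt_ofReal_cpow_const' (ne_of_gt (hpos x hx)) hz1
    simpa using h
  have hu : ∀ x ∈ Set.uIcc a b, HasDerivAt g (deriv g x) x := fun x _ =>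
    (hg.differentiable (one_pos.trans_le one_le_einf).ne').differentiableAt.hasDerivAt
  have hu' : IntervalIntegrable (deriv g) volume a b :=
    (hg.continuous_deriv one_le_einf).intervalIntegrable a b
  have hv' : IntervalIntegrable (fun x : ℝ => (x : ℂ) ^ (z - 1)) volume a b := by
    apply ContinuousOn.intervalIntegrable
    intro x hx
    exact (Complex.continuousAt_ofReal_cpow_const x (z - 1)
      (Or.inr (ne_of_gt (hpos x hx)))).continuousWithinAt
  have key := intervalIntegral.integral_mul_deriv_eq_deriv_mul
    (u := g) (v := fun y : ℝ => (y : ℂ) ^ z / z) (u' := deriv g)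
    (v' := fun x : ℝ => (x : ℂ) ^ (z - 1)) hu hv hu' hv'
  rw [key, hga, hgb]
  simp only [zero_mul, sub_zero, zero_sub]
  rw [show (fun x : ℝ => deriv g x * ((x:ℂ) ^ z / z)) = fun x : ℝ => (deriv g x * (x:ℂ) ^ z) / z by
    funext x; ring]
  rw [intervalIntegral.integral_div]
  ring

lemma tsupport_iteratedDeriv_sub (g : ℝ → ℂ) (n : ℕ) :
    tsupport (iteratedDeriv n g) ⊆ tsupport g := by
  induction n with
  | zero => simp [iteratedDeriv_zero]
  | succ n ih =>
    rw [iteratedDeriv_succ]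
    refine subset_trans ?_ ih
    exact closure_minimal (support_deriv_subset) isClosed_closure

lemma mellin_iter (a b : ℝ) (ha : 0 < a) (hab : a ≤ b) (n : ℕ) :
    ∀ g : ℝ → ℂ, ContDiff ℝ einf g → tsupport g ⊆ Ioo a b → ∀ z : ℂ, 0 < z.re →
    ‖∫ x in a..b, g x * (x : ℂ) ^ (z - 1)‖ * ∏ k ∈ Finset.range n, ‖z + (k : ℂ)‖
      = ‖∫ x in a..b, iteratedDeriv n g x * (x : ℂ) ^ (z + n - 1)‖ := by
  induction n with
  | zero => intro g hg hsupp z hz; simp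
  | succ n ih =>
    intro g hg hsupp z hz
    have hgn : ContDiff ℝ einf (iteratedDeriv n g) := by
      rw [iteratedDeriv_eq_iterate, einf]
      exact ContDiff.iterate_deriv n (by rw [einf] at hg; exact hg)
    have hsn : tsupport (iteratedDeriv n g) ⊆ Ioo a b :=
      subset_trans (tsupport_iteratedDeriv_sub g n) hsupp
    have hzn : (z + (n : ℂ)) ≠ 0 := by
      intro h
      have : (z + (n : ℂ)).re = 0 := by rw [h]; simp
      simp only [Complex.add_re, Complex.natCast_re] at this
      have : (0:ℝ) ≤ (n:ℝ) := Nat.cast_nonneg n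
      nlinarith [hz]
    have hga : iteratedDeriv n g a = 0 := by
      apply image_eq_zero_of_notMem_tsupport
      intro h
      exact lt_irrefl a (lt_of_lt_of_le (hsn h).1 le_rfl)
    have hgb : iteratedDeriv n g b = 0 := by
      apply image_eq_zero_of_notMem_tsupport
      intro h
      exact lt_irrefl b (hsn h).2
    have step := mellin_ibp_step a b ha hab (iteratedDeriv n g) hgn hga hgb (z + n) hzn
    rw [Finset.prod_range_succ, ← mul_assoc]
    rw [ih g hg hsupp z hz]
    rw [show z + (n:ℂ) - 1 = (z + (n:ℂ)) - 1 by ring, step]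
    rw [norm_neg, norm_mul, norm_inv]
    rw [show (z : ℂ) + ((n:ℕ)+1 : ℕ) - 1 = z + (n:ℂ) by push_cast; ring]
    rw [iteratedDeriv_succ]
    have habs : ‖z + (n:ℂ)‖ ≠ 0 := by simpa using hzn
    field_simp

/-- Decay of the Mellin transform of the smooth weight `w`: for fixed `j ≥ 0` and
`σ ∈ (0, 1]` there is `C' > 0` (depending only on `j` and `σ`) such that for all `T ≥ 1`,
`U ∈ (0, 1/2)`, `α ∈ ℝ`, `C > 0`, and every smooth `w : ℝ → ℂ` supported in
`[T(1−U), T(2+U)]` with `|w^{(i)}(x)| ≤ C T^α (TU)^{−i}` for `0 ≤ i ≤ j`, one has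
`|∫_0^∞ w(x) x^{σ+iτ−1} dx| ≤ C' C T^{σ+α} U^{−j} / (1 + |τ|^j)` for every real `τ`. -/
theorem stmt_8 (j : ℕ) (σ : ℝ) (hσ : σ ∈ Set.Ioc (0 : ℝ) 1) :
    ∃ C' : ℝ, 0 < C' ∧
      ∀ T : ℝ, 1 ≤ T → ∀ U : ℝ, U ∈ Set.Ioo (0 : ℝ) (1/2) → ∀ α : ℝ, ∀ C : ℝ, 0 < C →
        ∀ w : ℝ → ℂ, ContDiff ℝ (⊤ : ℕ∞) w →
          tsupport w ⊆ Set.Icc (T * (1 - U)) (T * (2 + U)) →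
          (∀ i : ℕ, i ≤ j → ∀ x : ℝ, ‖iteratedDeriv i w x‖ ≤ C * T ^ α * (T * U) ^ (-(i : ℤ))) →
          ∀ τ : ℝ,
            ‖∫ x in Set.Ioi (0 : ℝ), w x * (x : ℂ) ^ ((σ : ℂ) + τ * Complex.I - 1)‖
              ≤ C' * C * T ^ (σ + α) * U ^ (-(j : ℤ)) / (1 + |τ| ^ j) := by
  obtain ⟨hσ0, hσ1⟩ := hσ
  refine ⟨10 * (6 / σ) ^ j, by positivity, ?_⟩
  intro T hT U hU α C hC w hw hws hbd τ
  have hT0 : (0:ℝ) < T := lt_of_lt_of_le one_pos hT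
  obtain ⟨hU0, hU1⟩ := hU
  set a : ℝ := T / 2 with ha_def
  set b : ℝ := 3 * T with hb_def
  have ha : 0 < a := by positivity
  have hab : a ≤ b := by rw [ha_def, hb_def]; linarith
  have hsupp' : tsupport w ⊆ Ioo a b := by
    refine subset_trans hws ?_
    intro x hx
    constructor
    · rw [ha_def]; nlinarith [hx.1]
    · rw [hb_def]; nlinarith [hx.2]
  set z : ℂ := (σ : ℂ) + τ * Complex.I with hz_def
  have hzre : z.re = σ := by simp [hz_def]
  have hzim : z.im = τ := by simp [hz_def]
  have hzrepos : 0 < z.re := by rw [hzre]; exact hσ0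
  -- step 1 : reduce to interval integral
  have hw0 : ∀ x : ℝ, x ∉ tsupport w → w x = 0 := fun x hx => image_eq_zero_of_notMem_tsupport hx
  have hstep1 : (∫ x in Set.Ioi (0:ℝ), w x * (x : ℂ) ^ ((σ : ℂ) + τ * Complex.I - 1))
      = ∫ x in a..b, w x * (x : ℂ) ^ (z - 1) := by
    rw [show (σ : ℂ) + τ * Complex.I - 1 = z - 1 by rw [hz_def]]
    have hsub : Function.support (fun x : ℝ => w x * (x : ℂ) ^ (z - 1)) ⊆ Ioc a b := by
      intro x hx
      have hxw : w x ≠ 0 := by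
        intro h; apply hx; simp [h]
      have : x ∈ tsupport w := subset_closure hxw
      exact Ioo_subset_Ioc_self (hsupp' this)
    rw [intervalIntegral.integral_eq_integral_of_support_subset hsub]
    apply setIntegral_eq_integral_of_forall_compl_eq_zero
    intro x hx
    have hxw : w x = 0 := by
      apply hw0
      intro h
      exact hx (lt_of_lt_of_le ha (le_of_lt (hsupp' h).1))
    simp [hxw]
  have hw' : ContDiff ℝ einf w := hw.of_le (le_of_eq rfl)
  have key := mellin_iter a b ha hab j w hw' hsupp' z hzrepos
  -- step 3 : bound the j-th integral
  set M : ℝ := C * T ^ α * (T * U) ^ (-(j : ℤ)) * (2 * 3 ^ j * T ^ (σ + (j:ℝ) - 1)) with hM_def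
  have hbound : ‖∫ x in a..b, iteratedDeriv j w x * (x : ℂ) ^ (z + (j:ℂ) - 1)‖ ≤ M * |b - a| := by
    apply intervalIntegral.norm_integral_le_of_norm_le_const
    intro x hx
    rw [Set.uIoc_of_le hab] at hx
    have hx0 : (0:ℝ) < x := lt_trans ha hx.1
    rw [norm_mul]
    have hcre : (z + (j:ℂ) - 1).re = σ + (j:ℝ) - 1 := by simp [hz_def]
    have hnorm : ‖(x:ℂ) ^ (z + (j:ℂ) - 1)‖ = x ^ (σ + (j:ℝ) - 1) := by
      rw [Complex.norm_cpow_eq_rpow_re_of_pos hx0, hcre]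
    rw [hnorm, hM_def]
    have h1 : ‖iteratedDeriv j w x‖ ≤ C * T ^ α * (T * U) ^ (-(j : ℤ)) := hbd j le_rfl x
    have h2 : x ^ (σ + (j:ℝ) - 1) ≤ 2 * 3 ^ j * T ^ (σ + (j:ℝ) - 1) := by
      have e1 : x ^ (σ + (j:ℝ) - 1) = x ^ (σ - 1) * x ^ (j:ℝ) := by
        rw [← Real.rpow_add hx0]; ring_nf
      have e2 : x ^ (σ - 1) ≤ 2 * T ^ (σ - 1) := by
        have l1 : x ^ (σ - 1) ≤ (T/2) ^ (σ - 1) :=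
          Real.rpow_le_rpow_of_nonpos (by positivity) hx.1.le (by linarith)
        have l2 : (T/2 : ℝ) ^ (σ - 1) = T ^ (σ - 1) / 2 ^ (σ - 1) :=
          Real.div_rpow hT0.le (by norm_num) (σ - 1)
        have l3 : (2:ℝ) ^ (-1 : ℝ) ≤ 2 ^ (σ - 1) :=
          Real.rpow_le_rpow_of_exponent_le (by norm_num) (by linarith)
        have l4 : (2:ℝ) ^ (-1 : ℝ) = 1/2 := by
          rw [Real.rpow_neg_one]; norm_num
        have l5 : T ^ (σ - 1) / 2 ^ (σ - 1) ≤ T ^ (σ - 1) / (1/2) := by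
          apply div_le_div_of_nonneg_left (Real.rpow_nonneg hT0.le _) (by norm_num)
          rw [← l4]; exact l3
        calc x ^ (σ - 1) ≤ (T/2) ^ (σ - 1) := l1
          _ = T ^ (σ - 1) / 2 ^ (σ - 1) := l2
          _ ≤ T ^ (σ - 1) / (1/2) := l5
          _ = 2 * T ^ (σ - 1) := by ring
      have e3 : x ^ (j:ℝ) ≤ 3 ^ (j:ℕ) * T ^ (j:ℝ) := by
        have : x ^ (j:ℝ) ≤ (3 * T) ^ (j:ℝ) :=
          Real.rpow_le_rpow hx0.le (by rw [hb_def] at hx; exact hx.2) (Nat.cast_nonneg j)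
        calc x ^ (j:ℝ) ≤ (3 * T) ^ (j:ℝ) := this
          _ = 3 ^ (j:ℝ) * T ^ (j:ℝ) := Real.mul_rpow (by norm_num) hT0.le
          _ = 3 ^ (j:ℕ) * T ^ (j:ℝ) := by rw [Real.rpow_natCast]
      have e4 : T ^ (σ - 1) * T ^ (j:ℝ) = T ^ (σ + (j:ℝ) - 1) := by
        rw [← Real.rpow_add hT0]; ring_nf
      calc x ^ (σ + (j:ℝ) - 1) = x ^ (σ - 1) * x ^ (j:ℝ) := e1
        _ ≤ (2 * T ^ (σ - 1)) * (3 ^ (j:ℕ) * T ^ (j:ℝ)) := by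
            apply mul_le_mul e2 e3 (Real.rpow_nonneg hx0.le _) (by positivity)
        _ = 2 * 3 ^ j * (T ^ (σ - 1) * T ^ (j:ℝ)) := by ring
        _ = 2 * 3 ^ j * T ^ (σ + (j:ℝ) - 1) := by rw [e4]
    have hnn : (0:ℝ) ≤ x ^ (σ + (j:ℝ) - 1) := Real.rpow_nonneg hx0.le _
    calc ‖iteratedDeriv j w x‖ * x ^ (σ + (j:ℝ) - 1)
        ≤ (C * T ^ α * (T * U) ^ (-(j : ℤ))) * (2 * 3 ^ j * T ^ (σ + (j:ℝ) - 1)) := by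
          apply mul_le_mul h1 h2 hnn (by positivity)
      _ = C * T ^ α * (T * U) ^ (-(j : ℤ)) * (2 * 3 ^ j * T ^ (σ + (j:ℝ) - 1)) := by ring
  -- step 4 : lower bound for the product
  set Q : ℝ := σ / 2 * (1 + |τ|) with hQ_def
  have hQpos : 0 < Q := by rw [hQ_def]; positivity
  have hfac : ∀ k : ℕ, Q ≤ ‖z + (k:ℂ)‖ := by
    intro k
    have hre : (z + (k:ℂ)).re = σ + (k:ℝ) := by simp [hz_def]
    have him : (z + (k:ℂ)).im = τ := by simp [hz_def]
    have h1 : σ ≤ ‖z + (k:ℂ)‖ := by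
      have := Complex.abs_re_le_norm (z + (k:ℂ))
      have hk : (0:ℝ) ≤ (k:ℝ) := Nat.cast_nonneg k
      calc σ ≤ σ + (k:ℝ) := by linarith
        _ ≤ |σ + (k:ℝ)| := le_abs_self _
        _ ≤ ‖z + (k:ℂ)‖ := by rw [← hre]; exact this
    have h2 : |τ| ≤ ‖z + (k:ℂ)‖ := by
      have := Complex.abs_im_le_norm (z + (k:ℂ))
      rw [him] at this
      exact this
    rw [hQ_def]
    rcases le_total |τ| 1 with h | h
    · nlinarith
    · nlinarith [abs_nonneg τ]
  set P : ℝ := ∏ k ∈ Finset.range j, ‖z + (k:ℂ)‖ with hP_def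
  have hPge : Q ^ j ≤ P := by
    rw [hP_def]
    calc Q ^ j = ∏ _k ∈ Finset.range j, Q := by rw [Finset.prod_const, Finset.card_range]
      _ ≤ ∏ k ∈ Finset.range j, ‖z + (k:ℂ)‖ :=
          Finset.prod_le_prod (fun k _ => hQpos.le) (fun k _ => hfac k)
  have hPpos : 0 < P := lt_of_lt_of_le (pow_pos hQpos j) hPge
  -- step 5 : combine
  have hI0 : ‖∫ x in Set.Ioi (0:ℝ), w x * (x : ℂ) ^ ((σ : ℂ) + τ * Complex.I - 1)‖
      = ‖∫ x in a..b, iteratedDeriv j w x * (x : ℂ) ^ (z + (j:ℂ) - 1)‖ / P := by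
    rw [hstep1, eq_div_iff hPpos.ne']
    exact key
  have habs : |b - a| = 5 / 2 * T := by
    rw [ha_def, hb_def, _root_.abs_of_nonneg (by linarith)]
    ring
  have hTj : (0:ℝ) < T ^ j := by positivity
  have hUj : (0:ℝ) < U ^ j := by positivity
  have hA : M * (5 / 2 * T) = 5 * 3 ^ j * C * T ^ (σ + α) * (U ^ j)⁻¹ := by
    have hzp : (T * U) ^ (-(j:ℤ)) = (T ^ j)⁻¹ * (U ^ j)⁻¹ := by
      rw [zpow_neg, zpow_natCast, mul_pow, mul_inv]
    have ht : T ^ α * T ^ (σ + (j:ℝ) - 1) * T = T ^ (σ + α) * T ^ j := by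
      calc T ^ α * T ^ (σ + (j:ℝ) - 1) * T = T ^ α * T ^ (σ + (j:ℝ) - 1) * T ^ (1:ℝ) := by
            rw [Real.rpow_one]
        _ = T ^ (α + (σ + (j:ℝ) - 1) + 1) := by rw [← Real.rpow_add hT0, ← Real.rpow_add hT0]
        _ = T ^ ((σ + α) + (j:ℝ)) := by ring_nf
        _ = T ^ (σ + α) * T ^ ((j:ℕ):ℝ) := Real.rpow_add hT0 _ _
        _ = T ^ (σ + α) * T ^ j := by rw [Real.rpow_natCast]
    rw [hM_def, hzp]
    calc C * T ^ α * ((T ^ j)⁻¹ * (U ^ j)⁻¹) * (2 * 3 ^ j * T ^ (σ + (j:ℝ) - 1)) * (5 / 2 * T)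
        = 5 * 3 ^ j * C * (U ^ j)⁻¹ * (T ^ α * T ^ (σ + (j:ℝ) - 1) * T) * (T ^ j)⁻¹ := by ring
      _ = 5 * 3 ^ j * C * (U ^ j)⁻¹ * (T ^ (σ + α) * T ^ j) * (T ^ j)⁻¹ := by rw [ht]
      _ = 5 * 3 ^ j * C * T ^ (σ + α) * (U ^ j)⁻¹ * (T ^ j * (T ^ j)⁻¹) := by ring
      _ = 5 * 3 ^ j * C * T ^ (σ + α) * (U ^ j)⁻¹ := by
          rw [mul_inv_cancel₀ hTj.ne']; ring
  have hMnn : (0:ℝ) ≤ M * |b - a| :=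
    le_trans (norm_nonneg _) hbound
  have hstep5 : ‖∫ x in Set.Ioi (0:ℝ), w x * (x : ℂ) ^ ((σ : ℂ) + τ * Complex.I - 1)‖
      ≤ (M * (5 / 2 * T)) / Q ^ j := by
    rw [hI0, ← habs]
    exact div_le_div₀ hMnn hbound (pow_pos hQpos j) hPge
  refine le_trans hstep5 ?_
  -- final arithmetic
  have hUzp : U ^ (-(j:ℤ)) = (U ^ j)⁻¹ := by rw [zpow_neg, zpow_natCast]
  rw [hA, hUzp]
  have htau : (0:ℝ) < 1 + |τ| ^ j := by positivity
  rw [div_le_div_iff₀ (pow_pos hQpos j) htau]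
  have hB : 1 + |τ| ^ j ≤ 2 * (1 + |τ|) ^ j := by
    have b1 : (1:ℝ) ≤ (1 + |τ|) ^ j := one_le_pow₀ (by linarith [abs_nonneg τ])
    have b2 : |τ| ^ j ≤ (1 + |τ|) ^ j := pow_le_pow_left₀ (abs_nonneg τ) (by linarith) j
    linarith
  have hpow : (6 / σ) ^ j * Q ^ j = 3 ^ j * (1 + |τ|) ^ j := by
    rw [hQ_def, ← mul_pow, ← mul_pow]
    congr 1
    field_simp
    ring
  calc 5 * 3 ^ j * C * T ^ (σ + α) * (U ^ j)⁻¹ * (1 + |τ| ^ j)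
      ≤ 5 * 3 ^ j * C * T ^ (σ + α) * (U ^ j)⁻¹ * (2 * (1 + |τ|) ^ j) := by
        apply mul_le_mul_of_nonneg_left hB
        positivity
    _ = 10 * C * T ^ (σ + α) * (U ^ j)⁻¹ * ((6 / σ) ^ j * Q ^ j) := by
        rw [hpow]; ring
    _ = 10 * (6 / σ) ^ j * C * T ^ (σ + α) * (U ^ j)⁻¹ * Q ^ j := by ring
end
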